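/- The intervals I_i, i ∈ ℤ, are pairwise disjoint, and their union over all i ∈ ℤ equals the open interval (0, √2). -/

import Mathlib

noncomputable section

/-- `β = √2 - 1`. -/
def β : ℝ := Real.sqrt 2 - 1

/-- `ω = √2 + 1`. -/
def ω : ℝ := Real.sqrt 2 + 1

/-- The break points `Δ_i`. -/
def Δ (i : ℤ) : ℝ :=
  if i < 0 then β ^ i.natAbs
  else if i = 0 then β
  else Real.sqrt 2 - β ^ i.natAbs

/-- The intervals `I_i`. -/
def Iint (i : ℤ) : Set ℝ :=
  if i < 0 then Set.Ioc (Δ (i - 1)) (Δ i)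
  else if i = 0 then Set.Ioo β 1
  else Set.Ico (Δ i) (Δ (i + 1))

/-- The defining formula of `f` on the interval `I_i`. -/
def fval (i : ℤ) (s : ℝ) : ℝ :=
  if i < 0 then ω ^ (i.natAbs + 1) * (Δ i - s)
  else if i = 0 then ω * (s - β)
  else ω ^ (i.natAbs + 1) * (s - Δ i)

/-- `f` is the renormalization map: `f 0 = f √2 = 0` and on each interval `I_i`
    it is given by the corresponding affine formula. These conditions determine
    `f` uniquely on `[0, √2]`. -/
def IsLuroth (f : ℝ → ℝ) : Prop :=
  f 0 = 0 ∧ f (Real.sqrt 2) = 0 ∧ ∀ i : ℤ, ∀ s ∈ Iint i, f s = fval i s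

/-- `ℚ(√2)` as a subset of `ℝ`. -/
def QSqrt2 : Set ℝ := {x | ∃ a b : ℚ, x = (a : ℝ) + (b : ℝ) * Real.sqrt 2}

/-- `ℤ[√2]` as a subset of `ℝ`. -/
def ZSqrt2 : Set ℝ := {x | ∃ m n : ℤ, x = (m : ℝ) + (n : ℝ) * Real.sqrt 2}

/-- `M_d = {s ∈ [0,√2] : d·s ∈ ℤ[√2]}`. -/
def Mset (d : ℤ) : Set ℝ :=
  {s | s ∈ Set.Icc 0 (Real.sqrt 2) ∧ (d : ℝ) * s ∈ ZSqrt2}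

/-! Reflection in `√2 / 2` maps `I_i` onto `I_{-i}`, and the nonpositive indices cut `(0, 1)` at the
decreasing powers `β^n`. So it suffices to order the nonpositive intervals, reflect to order the
nonnegative ones, and pass through `I_0` for the mixed pairs; the covering of `(0, √2)` likewise
reduces to that of `(0, 1)`, given by the Archimedean property of `β < 1`. -/

open Set

lemma β_pos : 0 < β := sub_pos.2 Real.one_lt_sqrt_two

lemma β_lt_one : β < 1 := by
  unfold β
  linarith [Real.sqrt_two_lt_three_halves]

lemma sqrt_two_sub_β : √2 - β = 1 := by
  unfold β
  ring

lemma Iint_zero : Iint 0 = Ioo β 1 := by simp [Iint]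

lemma Iint_of_neg {i : ℤ} (hi : i < 0) : Iint i = Ioc (β ^ (i.natAbs + 1)) (β ^ i.natAbs) := by
  have h : (i - 1).natAbs = i.natAbs + 1 := by omega
  simp [Iint, Δ, hi, show i - 1 < 0 by omega, h]

lemma Iint_of_pos {i : ℤ} (hi : 0 < i) :
    Iint i = Ico (√2 - β ^ i.natAbs) (√2 - β ^ (i.natAbs + 1)) := by
  have h : (i + 1).natAbs = i.natAbs + 1 := by omega
  simp [Iint, Δ, hi.not_gt, hi.ne', show ¬i + 1 < 0 by omega, show i + 1 ≠ 0 by omega, h]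

lemma Iint_neg (i : ℤ) : Iint (-i) = (√2 - ·) ⁻¹' Iint i := by
  rcases lt_trichotomy i 0 with hi | rfl | hi
  · rw [Iint_of_pos (neg_pos.2 hi), Iint_of_neg hi, preimage_const_sub_Ioc, Int.natAbs_neg]
  · rw [neg_zero, Iint_zero, preimage_const_sub_Ioo, sqrt_two_sub_β]
    rfl
  · rw [Iint_of_neg (neg_neg_iff_pos.2 hi), Iint_of_pos hi, preimage_const_sub_Ico,
      sub_sub_cancel, sub_sub_cancel, Int.natAbs_neg]

lemma sqrt_two_sub_mem_Iint_neg {i : ℤ} {x : ℝ} : √2 - x ∈ Iint (-i) ↔ x ∈ Iint i := by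
  rw [Iint_neg, mem_preimage, sub_sub_cancel]

lemma Iint_subset_Ioc_of_nonpos {i : ℤ} (hi : i ≤ 0) :
    Iint i ⊆ Ioc (β ^ (i.natAbs + 1)) (β ^ i.natAbs) := by
  rcases hi.lt_or_eq with hi | rfl
  · exact (Iint_of_neg hi).subset
  · simpa [Iint_zero] using Ioo_subset_Ioc_self

lemma Iint_subset_Ioc_zero_one {i : ℤ} (hi : i ≤ 0) : Iint i ⊆ Ioc 0 1 :=
  (Iint_subset_Ioc_of_nonpos hi).trans <|
    Ioc_subset_Ioc (pow_pos β_pos _).le (pow_le_one₀ β_pos.le β_lt_one.le)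

lemma Iint_subset_Ioo (i : ℤ) : Iint i ⊆ Ioo 0 √2 := by
  intro x hx
  rcases le_or_gt i 0 with hi | hi
  · obtain ⟨h0, h1⟩ := Iint_subset_Ioc_zero_one hi hx
    exact ⟨h0, h1.trans_lt Real.one_lt_sqrt_two⟩
  · obtain ⟨h0, h1⟩ := Iint_subset_Ioc_zero_one (neg_nonpos.2 hi.le)
      (sqrt_two_sub_mem_Iint_neg.2 hx)
    exact ⟨by linarith [sqrt_two_sub_β, β_pos], by linarith⟩

lemma Iint_lt_of_lt_of_nonpos {i j : ℤ} (hij : i < j) (hj : j ≤ 0) {x y : ℝ}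
    (hx : x ∈ Iint i) (hy : y ∈ Iint j) : x < y := by
  calc x ≤ β ^ i.natAbs := (Iint_subset_Ioc_of_nonpos (hij.le.trans hj) hx).2
    _ ≤ β ^ (j.natAbs + 1) := pow_le_pow_of_le_one β_pos.le β_lt_one.le (by omega)
    _ < y := (Iint_subset_Ioc_of_nonpos hj hy).1

lemma Iint_lt_of_lt_of_nonneg {i j : ℤ} (hij : i < j) (hi : 0 ≤ i) {x y : ℝ}
    (hx : x ∈ Iint i) (hy : y ∈ Iint j) : x < y := by
  have := Iint_lt_of_lt_of_nonpos (neg_lt_neg hij) (neg_nonpos.2 hi)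
    (sqrt_two_sub_mem_Iint_neg.2 hy) (sqrt_two_sub_mem_Iint_neg.2 hx)
  linarith

lemma Iint_lt_of_lt {i j : ℤ} (hij : i < j) {x y : ℝ} (hx : x ∈ Iint i) (hy : y ∈ Iint j) :
    x < y := by
  rcases le_or_gt j 0 with hj | hj
  · exact Iint_lt_of_lt_of_nonpos hij hj hx hy
  rcases le_or_gt 0 i with hi | hi
  · exact Iint_lt_of_lt_of_nonneg hij hi hx hy
  obtain ⟨z, hz⟩ : (Iint 0).Nonempty := by
    rw [Iint_zero]
    exact nonempty_Ioo.2 β_lt_one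
  exact (Iint_lt_of_lt_of_nonpos hi le_rfl hx hz).trans (Iint_lt_of_lt_of_nonneg hj le_rfl hz hy)

lemma exists_mem_Iint_of_mem_Ioo_zero_one {x : ℝ} (hx : x ∈ Ioo 0 1) : ∃ i, x ∈ Iint i := by
  obtain ⟨n, hlt, hle⟩ := exists_nat_pow_near_of_lt_one hx.1 hx.2.le β_pos β_lt_one
  rcases n.eq_zero_or_pos with rfl | hn
  · exact ⟨0, by rw [Iint_zero]; exact ⟨by simpa using hlt, hx.2⟩⟩
  · refine ⟨-n, ?_⟩
    rw [Iint_of_neg (by omega), Int.natAbs_neg, Int.natAbs_natCast]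
    exact ⟨hlt, hle⟩

/-- the intervals `I_i`, `i ∈ ℤ`, are pairwise disjoint and
their union is `(0, √2)`. -/
theorem Iint_pairwise_disjoint_and_union :
    (∀ i j : ℤ, i ≠ j → Disjoint (Iint i) (Iint j)) ∧
    (⋃ i : ℤ, Iint i) = Set.Ioo (0 : ℝ) (Real.sqrt 2) := by
  refine ⟨fun i j hij => ?_, Subset.antisymm (iUnion_subset Iint_subset_Ioo) ?_⟩
  · rcases hij.lt_or_gt with h | h
    · exact disjoint_left.2 fun x hi hj => (Iint_lt_of_lt h hi hj).false
    · exact disjoint_left.2 fun x hi hj => (Iint_lt_of_lt h hj hi).false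
  rintro x ⟨h0, h2⟩
  rw [mem_iUnion]
  rcases lt_or_ge x 1 with h1 | h1
  · exact exists_mem_Iint_of_mem_Ioo_zero_one ⟨h0, h1⟩
  · obtain ⟨i, hi⟩ := exists_mem_Iint_of_mem_Ioo_zero_one (x := √2 - x)
      ⟨sub_pos.2 h2, by linarith [sqrt_two_sub_β, β_lt_one]⟩
    exact ⟨-i, by rwa [Iint_neg]⟩
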